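/- Let G=(V,E) be a finite connected undirected graph with positive conductances and marked vertex b, and let z₀≠b be a vertex. Under the probability measure on two-component spanning forests proportional to weight, conditioned on the event that z₀ lies in the floating component Σ, the conditional expected number of vertices of Σ equals Σ_{v∈V} G_{v,z₀} / G_{z₀,z₀}. -/

import Mathlib

/-!
Let `F v` be the total weight of the 2SFs whose floating component contains both `v` and `z₀`:
the numerator is `∑ v, F v` and the denominator is `F z₀`. Adding the edge `vw` maps the 2SFs
separating `v` from `w` bijectively onto the spanning trees through `vw`, so `(Δ F) v` is a sum
over spanning trees `T` of `wt T` times a sum over the edges `vw ∈ T`; for each tree that inner sum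
counts the edges at `v` separating `v` from `b` minus those separating `v` from `z₀`, which is
`1 - 1` or, for `v = z₀`, `1 - 0`. Hence `F` vanishes at `b` and `Δ F = κ δ_{z₀}` off `b`, so
`F = κ G(·, z₀)`, where `κ > 0` is the total weight of spanning trees, and `κ` cancels in the ratio.
-/

open scoped Classical BigOperators

noncomputable section

namespace TwoSF

variable {V : Type*} [Fintype V] [DecidableEq V]

/-- `u` and `v` are linked by the edges in `B`. -/
def Linked (B : Finset (Sym2 V)) : V → V → Prop :=
  Relation.ReflTransGen fun a b => s(a, b) ∈ B

/-- The number of connected components of the spanning subgraph `(V, B)`. -/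
def ncomp (B : Finset (Sym2 V)) : ℕ :=
  Nat.card (Quot (Linked B))

/-- `B` is a spanning forest of the complete graph on `V` with exactly `k`
connected components: it has `k` components and, by the rank count
`|B| + k = |V|`, it is acyclic (in particular it contains no loop edge).
Taking `k = 1` gives spanning trees, `k = 2` gives two-component spanning
forests (2SF). -/
def IsSF (k : ℕ) (B : Finset (Sym2 V)) : Prop :=
  ncomp B = k ∧ B.card + k = Fintype.card V

/-- The weight of an edge set: the product of its conductances. -/
def wt (c : Sym2 V → ℝ) (B : Finset (Sym2 V)) : ℝ := ∏ e ∈ B, c e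

/-- κ: the weighted sum of spanning trees.  Edge sets containing a non-edge
(an `e` with `c e = 0`) contribute weight `0`, so this is the weighted number
of spanning trees of the graph whose edges are the support of `c`. -/
def kappa1 (c : Sym2 V → ℝ) : ℝ := ∑ B ∈ Finset.univ.filter (IsSF 1), wt c B

/-- κ₂: the weighted sum of two-component spanning forests. -/
def kappa2 (c : Sym2 V → ℝ) : ℝ := ∑ B ∈ Finset.univ.filter (IsSF 2), wt c B

/-- The floating component of `B`: the set of vertices not linked to `b`. -/
def floating (b : V) (B : Finset (Sym2 V)) : Finset V :=
  Finset.univ.filter fun v => ¬ Linked B b v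

/-- The graph Laplacian `Δ` of the graph with conductances `c`. -/
def lap (c : Sym2 V → ℝ) : Matrix V V ℝ := fun u v =>
  if u = v then ∑ w ∈ Finset.univ.filter (· ≠ u), c s(u, w) else -c s(u, v)

/-- The Dirichlet Laplacian `Δ_D`, indexed by `V \ {b}`. -/
def dlap (c : Sym2 V → ℝ) (b : V) : Matrix {w : V // w ≠ b} {w : V // w ≠ b} ℝ :=
  Matrix.of fun p q => lap c p.1 q.1

/-- The Green function with Dirichlet boundary condition at `b` (the inverse of
the Dirichlet Laplacian), with the convention that it vanishes as soon as one
of its arguments is `b`. -/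
def green (c : Sym2 V → ℝ) (b : V) (u v : V) : ℝ :=
  if hu : u = b then 0 else if hv : v = b then 0 else (dlap c b)⁻¹ ⟨u, hu⟩ ⟨v, hv⟩

/-- The probability of the event `p` under the probability measure on
two-component spanning forests assigning to each 2SF a probability
proportional to its weight. -/
def pr2 (c : Sym2 V → ℝ) (p : Finset (Sym2 V) → Prop) : ℝ :=
  (∑ B ∈ Finset.univ.filter (fun B => IsSF 2 B ∧ p B), wt c B) / kappa2 c

/-- The expectation of `((floating b B).card : ℝ) ^ k`, i.e. of `|Σ|^k`, under
the probability measure on two-component spanning forests proportional to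
weight. -/
def expPow (c : Sym2 V → ℝ) (b : V) (k : ℕ) : ℝ :=
  (∑ B ∈ Finset.univ.filter (IsSF 2), wt c B * ((floating b B).card : ℝ) ^ k) / kappa2 c

/-- `|∂Σ|`: the sum of the conductances of the edges having exactly one
endpoint in the floating component of `B`. -/
def bdryWt (c : Sym2 V → ℝ) (b : V) (B : Finset (Sym2 V)) : ℝ :=
  ∑ u ∈ floating b B, ∑ v ∈ (floating b B)ᶜ, c s(u, v)

/-- The expectation of `|∂Σ|` under the probability measure on two-component
spanning forests proportional to weight. -/
def expBdry (c : Sym2 V → ℝ) (b : V) : ℝ :=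
  (∑ B ∈ Finset.univ.filter (IsSF 2), wt c B * bdryWt c b B) / kappa2 c

end TwoSF

namespace TwoSF

open Finset Matrix

variable {V : Type*} {B B' T : Finset (Sym2 V)} {u v w x y : V}

@[simp]
theorem linked_refl : Linked B u u := .refl

theorem Linked.symm (h : Linked B u v) : Linked B v u := by
  induction h with
  | refl => exact .refl
  | tail _ hbc ih => exact ih.head (by rwa [Sym2.eq_swap])

theorem Linked.trans (h : Linked B u v) (h' : Linked B v w) : Linked B u w :=
  Relation.ReflTransGen.trans h h'

theorem Linked.mono (hB : B ⊆ B') (h : Linked B u v) : Linked B' u v :=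
  Relation.ReflTransGen.mono (fun _ _ hab => hB hab) _ _ h

theorem linked_of_mem (h : s(u, v) ∈ B) : Linked B u v :=
  Relation.ReflTransGen.single h

theorem linked_equivalence (B : Finset (Sym2 V)) : Equivalence (Linked B) :=
  ⟨fun _ => .refl, Linked.symm, Linked.trans⟩

theorem mk_eq_mk_iff : Quot.mk (Linked B) u = Quot.mk (Linked B) v ↔ Linked B u v :=
  Quot.eq.trans (linked_equivalence B).eqvGen_iff

instance [Finite V] (B : Finset (Sym2 V)) : Finite (Quot (Linked B)) :=
  Finite.of_surjective _ Quot.mk_surjective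

theorem linked_of_ncomp_eq_one (h : ncomp B = 1) (u v : V) : Linked B u v := by
  rw [ncomp, Nat.card_eq_one_iff_unique] at h
  exact mk_eq_mk_iff.1 (h.1.elim _ _)

section DecidableEq

variable [DecidableEq V]

theorem linked_insert_iff :
    Linked (insert s(x, y) B) u v ↔
      Linked B u v ∨ (Linked B u x ∧ Linked B y v) ∨ (Linked B u y ∧ Linked B x v) := by
  have hsub : B ⊆ insert s(x, y) B := subset_insert _ _
  have hxy : Linked (insert s(x, y) B) x y := linked_of_mem (mem_insert_self _ _)
  constructor
  · intro h
    induction h with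
    | refl => exact .inl .refl
    | @tail m n _ hmn ih =>
      rcases mem_insert.1 hmn with he | hmn
      · rcases Sym2.eq_iff.1 he with ⟨rfl, rfl⟩ | ⟨rfl, rfl⟩ <;> tauto
      · have step : ∀ {a}, Linked B a m → Linked B a n := fun h => h.tail hmn
        tauto
  · rintro (h | ⟨h, h'⟩ | ⟨h, h'⟩)
    · exact h.mono hsub
    · exact ((h.mono hsub).trans hxy).trans (h'.mono hsub)
    · exact ((h.mono hsub).trans hxy.symm).trans (h'.mono hsub)

theorem linked_insert_eq_of_linked (h : Linked B x y) :
    Linked (insert s(x, y) B) = Linked B := by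
  ext u v
  rw [linked_insert_iff]
  constructor
  · rintro (h' | ⟨h₁, h₂⟩ | ⟨h₁, h₂⟩)
    · exact h'
    · exact (h₁.trans h).trans h₂
    · exact (h₁.trans h.symm).trans h₂
  · exact .inl

theorem ncomp_insert_of_linked (h : Linked B x y) : ncomp (insert s(x, y) B) = ncomp B := by
  rw [ncomp, ncomp, linked_insert_eq_of_linked h]

/-- The classes of `B` are mapped bijectively onto `Option` of the classes of `insert s(x, y) B`,
the class of `y`, absorbed into that of `x`, going to `none`. -/
theorem ncomp_insert_of_not_linked [Finite V] (h : ¬ Linked B x y) :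
    ncomp B = ncomp (insert s(x, y) B) + 1 := by
  set B' := insert s(x, y) B
  have hsub : B ⊆ B' := subset_insert _ _
  have hxy : Linked B' x y := linked_of_mem (mem_insert_self _ _)
  let g : Quot (Linked B) → Option (Quot (Linked B')) :=
    Quot.lift (fun u => if Linked B u y then none else some (Quot.mk _ u)) fun u u' huu' => by
      by_cases hu : Linked B u y
      · simp [hu, huu'.symm.trans hu]
      · have hu' : ¬ Linked B u' y := fun h' => hu (huu'.trans h')
        simp [hu, hu', mk_eq_mk_iff, huu'.mono hsub]
  have hg : Function.Bijective g := by
    refine ⟨?_, ?_⟩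
    · rintro ⟨u⟩ ⟨u'⟩ heq
      by_cases hu : Linked B u y <;> by_cases hu' : Linked B u' y <;>
        simp only [g, hu, hu', if_true, if_false, reduceCtorEq, Option.some.injEq,
          mk_eq_mk_iff] at heq ⊢
      · exact hu.trans hu'.symm
      · rcases linked_insert_iff.1 heq with heq | ⟨-, heq⟩ | ⟨heq, -⟩
        · exact heq
        · exact absurd heq.symm hu'
        · exact absurd heq hu
    · rintro (_ | ⟨⟨u⟩⟩)
      · exact ⟨Quot.mk _ y, by simp [g]⟩
      by_cases hu : Linked B u y
      · refine ⟨Quot.mk _ x, ?_⟩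
        simp only [g, h, if_false, Option.some.injEq, mk_eq_mk_iff]
        exact hxy.trans (hu.symm.mono hsub)
      · exact ⟨Quot.mk _ u, by simp [g, hu]⟩
  rw [ncomp, ncomp, Nat.card_congr (Equiv.ofBijective g hg), Finite.card_option]

/-- The first edge of a walk from `v` to `x` that leaves `v` for the last time. -/
theorem exists_mem_linked_erase (h : Linked B v x) (hvx : v ≠ x) :
    ∃ w, s(v, w) ∈ B ∧ Linked (B.erase s(v, w)) w x := by
  induction h with
  | refl => exact absurd rfl hvx
  | @tail m x _ hmx ih =>
    by_cases hvm : v = m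
    · subst hvm
      exact ⟨x, hmx, .refl⟩
    obtain ⟨w, hw, hwm⟩ := ih hvm
    refine ⟨w, hw, hwm.tail (mem_erase.2 ⟨fun he => ?_, hmx⟩)⟩
    rcases Sym2.eq_iff.1 he with ⟨rfl, -⟩ | ⟨-, rfl⟩
    · exact hvm rfl
    · exact hvx rfl

end DecidableEq

variable [Fintype V]

theorem mem_floating_iff : v ∈ floating x B ↔ ¬ Linked B x v := by
  simp [floating]

theorem mem_floating_iff_of_linked (h : Linked B v w) :
    v ∈ floating x B ↔ w ∈ floating x B := by
  simp only [mem_floating_iff]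
  exact not_congr ⟨fun h' => h'.trans h, fun h' => h'.trans h.symm⟩

theorem ncomp_empty : ncomp (∅ : Finset (Sym2 V)) = Fintype.card V := by
  rw [ncomp, ← Nat.card_eq_fintype_card]
  refine (Nat.card_eq_of_bijective (Quot.mk _) ⟨fun u v huv => ?_, Quot.mk_surjective⟩).symm
  induction mk_eq_mk_iff.1 huv with
  | refl => rfl
  | tail _ h => exact absurd h (notMem_empty _)

variable [DecidableEq V]

theorem exists_forest_subset (B : Finset (Sym2 V)) :
    ∃ F ⊆ B, F.card + ncomp F = Fintype.card V ∧ Linked F = Linked B := by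
  induction B using Finset.induction_on with
  | empty => exact ⟨∅, subset_rfl, by simp [ncomp_empty], rfl⟩
  | @insert e B _ ih =>
    obtain ⟨F, hFB, hcard, hF⟩ := ih
    induction e using Sym2.ind with | _ x y => ?_
    by_cases hxy : Linked F x y
    · refine ⟨F, hFB.trans (subset_insert _ _), hcard, ?_⟩
      ext u v
      rw [linked_insert_iff, ← hF, ← linked_insert_iff, linked_insert_eq_of_linked hxy]
    · have hnew : s(x, y) ∉ F := fun h => hxy (linked_of_mem h)
      refine ⟨insert s(x, y) F, insert_subset_insert _ hFB, ?_, ?_⟩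
      · rw [card_insert_of_notMem hnew]
        have := ncomp_insert_of_not_linked hxy
        omega
      · ext u v
        rw [linked_insert_iff, linked_insert_iff, hF]

theorem card_add_ncomp_ge (B : Finset (Sym2 V)) : Fintype.card V ≤ B.card + ncomp B := by
  obtain ⟨F, hFB, hcard, hF⟩ := exists_forest_subset B
  have : ncomp F = ncomp B := by rw [ncomp, ncomp, hF]
  have := card_le_card hFB
  omega

theorem IsSF.erase {k : ℕ} (hT : IsSF k T) (he : s(x, y) ∈ T) :
    IsSF (k + 1) (T.erase s(x, y)) ∧ ¬ Linked (T.erase s(x, y)) x y := by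
  obtain ⟨hcomp, hcard⟩ := hT
  have hins := insert_erase he
  have hcard' := card_erase_add_one he
  have hnl : ¬ Linked (T.erase s(x, y)) x y := by
    intro hl
    have := ncomp_insert_of_linked hl
    have := card_add_ncomp_ge (T.erase s(x, y))
    rw [hins] at *
    omega
  have := ncomp_insert_of_not_linked hnl
  rw [hins] at this
  exact ⟨⟨by omega, by omega⟩, hnl⟩

theorem IsSF.insert {k : ℕ} (hB : IsSF (k + 1) B) (h : ¬ Linked B x y) :
    IsSF k (insert s(x, y) B) := by
  obtain ⟨hcomp, hcard⟩ := hB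
  have := ncomp_insert_of_not_linked h
  refine ⟨by omega, ?_⟩
  rw [card_insert_of_notMem fun he => h (linked_of_mem he)]
  omega

theorem IsSF.linked_or_linked_erase (hT : IsSF 1 T) (he : s(x, y) ∈ T) (u : V) :
    Linked (T.erase s(x, y)) u x ∨ Linked (T.erase s(x, y)) u y := by
  have := linked_of_ncomp_eq_one hT.1 u x
  rw [← insert_erase he, linked_insert_iff] at this
  rcases this with h | ⟨h, -⟩ | ⟨h, -⟩
  exacts [.inl h, .inl h, .inr h]

theorem IsSF.eq_of_not_linked_erase (hT : IsSF 1 T) {w' : V} (hw : s(v, w) ∈ T)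
    (hw' : s(v, w') ∈ T) (h : ¬ Linked (T.erase s(v, w)) v x)
    (h' : ¬ Linked (T.erase s(v, w')) v x) : w = w' := by
  by_contra hne
  have hne' : s(v, w') ≠ s(v, w) := fun he => hne (Sym2.congr_right.1 he).symm
  have hwx : Linked (T.erase s(v, w)) w x := by
    have := linked_of_ncomp_eq_one hT.1 v x
    rw [← insert_erase hw, linked_insert_iff] at this
    tauto
  rw [← insert_erase (mem_erase.2 ⟨hne', hw'⟩), linked_insert_iff] at hwx
  rcases hwx with hwx | ⟨hwv, -⟩ | ⟨-, hvx⟩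
  · have hsub : (T.erase s(v, w)).erase s(v, w') ⊆ T.erase s(v, w') := by
      rw [erase_right_comm]
      exact erase_subset _ _
    exact h' ((linked_of_mem (mem_erase.2 ⟨hne'.symm, hw⟩)).trans (hwx.mono hsub))
  · exact (hT.erase hw).2 (hwv.mono (erase_subset _ _)).symm
  · exact h (hvx.mono (erase_subset _ _))

theorem IsSF.card_filter_not_linked_erase (hT : IsSF 1 T) (v x : V) :
    ((univ.filter fun w => w ≠ v ∧ s(v, w) ∈ T).filter
      fun w => ¬ Linked (T.erase s(v, w)) v x).card = if v = x then 0 else 1 := by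
  split_ifs with hvx
  · simp [hvx]
  obtain ⟨w, hw, hwx⟩ := exists_mem_linked_erase (linked_of_ncomp_eq_one hT.1 v x) hvx
  have hvw := (hT.erase hw).2
  refine card_eq_one.2 ⟨w, eq_singleton_iff_unique_mem.2 ⟨?_, fun w' hw' => ?_⟩⟩
  · simp only [mem_filter, mem_univ, true_and]
    refine ⟨⟨?_, hw⟩, fun h => hvw (h.trans hwx.symm)⟩
    rintro rfl
    exact hvw .refl
  · simp only [mem_filter, mem_univ, true_and] at hw'
    exact hT.eq_of_not_linked_erase hw'.1.2 hw hw'.2 fun h => hvw (h.trans hwx.symm)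

theorem sum_twoSF_not_linked (c : Sym2 V → ℝ) (v w : V) (f : Finset (Sym2 V) → ℝ) :
    ∑ B ∈ univ.filter (fun B => IsSF 2 B ∧ ¬ Linked B v w), c s(v, w) * wt c B * f B =
      ∑ T ∈ univ.filter (fun T => IsSF 1 T ∧ s(v, w) ∈ T), wt c T * f (T.erase s(v, w)) := by
  refine sum_nbij' (insert s(v, w)) (erase · s(v, w)) ?_ ?_ ?_ ?_ ?_ <;>
    simp only [mem_filter, mem_univ, true_and]
  · rintro B ⟨hB, hvw⟩
    exact ⟨hB.insert hvw, mem_insert_self _ _⟩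
  · rintro T ⟨hT, he⟩
    exact hT.erase he
  · rintro B ⟨-, hvw⟩
    exact erase_insert fun he => hvw (linked_of_mem he)
  · rintro T ⟨-, he⟩
    exact insert_erase he
  · rintro B ⟨-, hvw⟩
    have he : s(v, w) ∉ B := fun he => hvw (linked_of_mem he)
    rw [erase_insert he, wt, wt, prod_insert he]

def bothFloating (b z : V) (B : Finset (Sym2 V)) (v : V) : ℝ :=
  if v ∈ floating b B ∧ z ∈ floating b B then 1 else 0

theorem IsSF.bothFloating_erase_sub (hT : IsSF 1 T) (he : s(v, w) ∈ T) (b z : V) :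
    bothFloating b z (T.erase s(v, w)) v - bothFloating b z (T.erase s(v, w)) w =
      (if ¬ Linked (T.erase s(v, w)) v b then 1 else 0) -
        (if ¬ Linked (T.erase s(v, w)) v z then 1 else 0) := by
  set B := T.erase s(v, w)
  -- `B` has the two components of `v` and `w`, so linkage in `B` is equality of sides.
  obtain ⟨p, hp⟩ : ∃ p : V → Prop, ∀ u₁ u₂, Linked B u₁ u₂ ↔ (p u₁ ↔ p u₂) := by
    refine ⟨fun u => Linked B u v, fun u₁ u₂ => ⟨fun h => ⟨h.symm.trans, h.trans⟩, fun h => ?_⟩⟩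
    rcases hT.linked_or_linked_erase he u₁ with h₁ | h₁
    · exact h₁.trans (h.1 h₁).symm
    rcases hT.linked_or_linked_erase he u₂ with h₂ | h₂
    · exact absurd ((h.2 h₂).symm.trans h₁) (hT.erase he).2
    · exact h₁.trans h₂.symm
  have hvw : ¬ (p v ↔ p w) := (hp v w).not.1 (hT.erase he).2
  simp only [bothFloating, mem_floating_iff, hp]
  by_cases p b <;> by_cases p z <;> by_cases p v <;> simp_all

theorem IsSF.sum_bothFloating_erase_sub (hT : IsSF 1 T) {b : V} (hv : v ≠ b) (z : V) :
    ∑ w ∈ univ.filter (fun w => w ≠ v ∧ s(v, w) ∈ T),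
      (bothFloating b z (T.erase s(v, w)) v - bothFloating b z (T.erase s(v, w)) w) =
      if v = z then 1 else 0 := by
  rw [sum_congr rfl fun w hw => hT.bothFloating_erase_sub (mem_filter.1 hw).2.2 b z,
    sum_sub_distrib, sum_boole, sum_boole, hT.card_filter_not_linked_erase,
    hT.card_filter_not_linked_erase, if_neg hv]
  split_ifs <;> norm_num

def floatingWt (c : Sym2 V → ℝ) (b z v : V) : ℝ :=
  ∑ B ∈ univ.filter (IsSF 2), wt c B * bothFloating b z B v

theorem floatingWt_base (c : Sym2 V → ℝ) (b z : V) : floatingWt c b z b = 0 :=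
  sum_eq_zero fun B _ => by simp [bothFloating, mem_floating_iff]

theorem lap_mulVec_apply (c : Sym2 V → ℝ) (g : V → ℝ) (v : V) :
    (lap c *ᵥ g) v = ∑ w ∈ univ.filter (· ≠ v), c s(v, w) * (g v - g w) := by
  rw [mulVec, dotProduct, ← add_sum_erase _ _ (mem_univ v), ← filter_ne', lap, if_pos rfl,
    sum_mul, ← sum_add_distrib]
  refine sum_congr rfl fun w hw => ?_
  rw [lap, if_neg (mem_filter.1 hw).2.symm]
  ring

theorem dlap_mulVec_apply (c : Sym2 V → ℝ) {b : V} {g : V → ℝ} (hgb : g b = 0)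
    (p : {w // w ≠ b}) : (dlap c b *ᵥ fun q => g q) p = (lap c *ᵥ g) p := by
  simp only [mulVec, dotProduct, dlap, of_apply]
  rw [← sum_subtype (univ.filter (· ≠ b)) (by simp) (fun u => lap c p u * g u),
    sum_filter_of_ne]
  rintro u - hu rfl
  simp [hgb] at hu

section Connected

variable {c : Sym2 V → ℝ} (hc : ∀ e, 0 ≤ c e)
  (hconn : ncomp (univ.filter fun e : Sym2 V => c e ≠ 0) = 1)
include hc hconn

theorem kappa1_pos : 0 < kappa1 c := by
  obtain ⟨T, hTsub, hcard, hT⟩ := exists_forest_subset (univ.filter fun e : Sym2 V => c e ≠ 0)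
  have hT1 : IsSF 1 T := by
    have : ncomp T = 1 := by rw [ncomp, hT]; exact hconn
    exact ⟨this, by omega⟩
  exact sum_pos' (fun B _ => prod_nonneg fun e _ => hc e)
    ⟨T, mem_filter.2 ⟨mem_univ _, hT1⟩,
      prod_pos fun e he => (hc e).lt_of_ne' (mem_filter.1 (hTsub he)).2⟩

/-- Maximum principle: at a maximum point of `g` outside `b` all neighbours share the maximal
value, which thus spreads along the connected graph to `b`. -/
theorem le_zero_of_lap_mulVec_eq_zero {b : V} {g : V → ℝ} (hgb : g b = 0)
    (hg : ∀ v ≠ b, (lap c *ᵥ g) v = 0) (u : V) : g u ≤ 0 := by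
  have : Nonempty V := ⟨b⟩
  obtain ⟨v₀, hv₀⟩ := Finite.exists_max g
  by_contra! hu
  have hpos : 0 < g v₀ := hu.trans_le (hv₀ u)
  have hconst : ∀ u, Linked (univ.filter fun e : Sym2 V => c e ≠ 0) v₀ u → g u = g v₀ := by
    intro u h
    induction h with
    | refl => rfl
    | @tail m u _ hmu ih =>
      have hmb : m ≠ b := by rintro rfl; linarith
      have hterms := (sum_eq_zero_iff_of_nonneg fun w _ =>
        mul_nonneg (hc _) (sub_nonneg.2 (ih ▸ hv₀ w))).1 (lap_mulVec_apply c g m ▸ hg m hmb)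
      by_cases hum : u = m
      · rw [hum, ih]
      rcases mul_eq_zero.1 (hterms u (by simp [hum])) with h | h
      · exact absurd h (mem_filter.1 hmu).2
      · linarith
  linarith [hconst b (linked_of_ncomp_eq_one hconn _ _)]

theorem eq_zero_of_lap_mulVec_eq_zero {b : V} {g : V → ℝ} (hgb : g b = 0)
    (hg : ∀ v ≠ b, (lap c *ᵥ g) v = 0) : g = 0 := by
  funext u
  have h₁ := le_zero_of_lap_mulVec_eq_zero hc hconn hgb hg u
  have h₂ := le_zero_of_lap_mulVec_eq_zero hc hconn (b := b) (g := -g) (by simp [hgb])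
    (fun v hv => by simp [mulVec_neg, hg v hv]) u
  rw [Pi.neg_apply, neg_nonpos] at h₂
  exact le_antisymm h₁ h₂

theorem det_dlap_ne_zero (b : V) : (dlap c b).det ≠ 0 := by
  intro h0
  obtain ⟨x, hx0, hx⟩ := exists_mulVec_eq_zero_iff.2 h0
  let g : V → ℝ := fun u => if h : u = b then 0 else x ⟨u, h⟩
  have hgx : (fun q : {w // w ≠ b} => g q) = x := funext fun q => dif_neg q.2
  have hgb : g b = 0 := dif_pos rfl
  have hg : g = 0 := eq_zero_of_lap_mulVec_eq_zero hc hconn hgb fun v hv => by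
    rw [← dlap_mulVec_apply c hgb ⟨v, hv⟩, hgx, hx]
    rfl
  apply hx0
  rw [← hgx, hg]
  rfl

theorem eq_mul_green_of_lap_mulVec {b z : V} {g : V → ℝ} (a : ℝ) (hgb : g b = 0)
    (hg : ∀ v ≠ b, (lap c *ᵥ g) v = if v = z then a else 0) (v : V) :
    g v = a * green c b v z := by
  by_cases hzb : z = b
  · subst hzb
    have := eq_zero_of_lap_mulVec_eq_zero hc hconn hgb fun v hv => by rw [hg v hv, if_neg hv]
    simp [this, green]
  by_cases hvb : v = b
  · simp [hvb, hgb, green]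
  set x : {w // w ≠ b} → ℝ := fun q => g q
  have hx : dlap c b *ᵥ x = Pi.single ⟨z, hzb⟩ a := by
    funext p
    rw [dlap_mulVec_apply c hgb, hg p p.2]
    simp [Pi.single_apply, Subtype.ext_iff]
  have hdet : IsUnit (dlap c b).det := (det_dlap_ne_zero hc hconn b).isUnit
  have hxinv : x = (dlap c b)⁻¹ *ᵥ Pi.single ⟨z, hzb⟩ a := by
    rw [← hx, mulVec_mulVec, nonsing_inv_mul _ hdet, one_mulVec]
  rw [green, dif_neg hvb, dif_neg hzb, show g v = x ⟨v, hvb⟩ from rfl, hxinv]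
  simp [mulVec_single, mul_comm]

end Connected

theorem lap_mulVec_floatingWt (c : Sym2 V → ℝ) (b z : V) (hv : v ≠ b) :
    (lap c *ᵥ floatingWt c b z) v = if v = z then kappa1 c else 0 := by
  calc (lap c *ᵥ floatingWt c b z) v
      = ∑ w ∈ univ.filter (· ≠ v), ∑ B ∈ univ.filter (fun B => IsSF 2 B ∧ ¬ Linked B v w),
          c s(v, w) * wt c B * (bothFloating b z B v - bothFloating b z B w) := by
        rw [lap_mulVec_apply]
        refine sum_congr rfl fun w _ => ?_
        rw [← filter_filter, sum_filter_of_ne, floatingWt, floatingWt, ← sum_sub_distrib,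
          mul_sum]
        · exact sum_congr rfl fun B _ => by ring
        · intro B _ hB hvw
          simp only [bothFloating, mem_floating_iff_of_linked hvw, sub_self, mul_zero] at hB
          exact hB rfl
    _ = ∑ w ∈ univ.filter (· ≠ v), ∑ T ∈ univ.filter (fun T => IsSF 1 T ∧ s(v, w) ∈ T),
          wt c T * (bothFloating b z (T.erase s(v, w)) v -
            bothFloating b z (T.erase s(v, w)) w) :=
        sum_congr rfl fun w _ => sum_twoSF_not_linked c v w _
    _ = ∑ T ∈ univ.filter (IsSF 1), wt c T * ∑ w ∈ univ.filter (fun w => w ≠ v ∧ s(v, w) ∈ T),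
          (bothFloating b z (T.erase s(v, w)) v - bothFloating b z (T.erase s(v, w)) w) := by
        simp_rw [mul_sum]
        exact sum_comm' fun w T => by simp only [mem_filter, mem_univ, true_and]; tauto
    _ = if v = z then kappa1 c else 0 := by
        rw [sum_congr rfl fun T hT => by rw [(mem_filter.1 hT).2.sum_bothFloating_erase_sub hv]]
        split_ifs <;> simp [kappa1]

theorem sum_wt_floating (c : Sym2 V → ℝ) (b z : V) :
    ∑ B ∈ univ.filter (fun B => IsSF 2 B ∧ z ∈ floating b B), wt c B = floatingWt c b z z := by
  rw [floatingWt, ← filter_filter, sum_filter]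
  simp [bothFloating]

theorem sum_wt_mul_card_floating (c : Sym2 V → ℝ) (b z : V) :
    ∑ B ∈ univ.filter (fun B => IsSF 2 B ∧ z ∈ floating b B), wt c B * (floating b B).card =
      ∑ v, floatingWt c b z v := by
  simp only [floatingWt]
  rw [sum_comm, ← filter_filter, sum_filter]
  refine sum_congr rfl fun B _ => ?_
  rw [← mul_sum]
  split_ifs with hz <;> simp [bothFloating, hz]

end TwoSF

open TwoSF

theorem statement_10_general {V : Type*} [Fintype V] [DecidableEq V] (c : Sym2 V → ℝ)
    (hc : ∀ e, 0 ≤ c e)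
    (hconn : ncomp (Finset.univ.filter fun e : Sym2 V => c e ≠ 0) = 1)
    (b z0 : V) :
    (∑ B ∈ Finset.univ.filter (fun B => IsSF 2 B ∧ z0 ∈ floating b B),
        wt c B * ((floating b B).card : ℝ)) /
      (∑ B ∈ Finset.univ.filter (fun B => IsSF 2 B ∧ z0 ∈ floating b B), wt c B) =
      (∑ v : V, green c b v z0) / green c b z0 z0 := by
  have hF : ∀ v, floatingWt c b z0 v = kappa1 c * green c b v z0 :=
    eq_mul_green_of_lap_mulVec hc hconn _ (floatingWt_base c b z0) fun v hv =>
      lap_mulVec_floatingWt c b z0 hv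
  rw [sum_wt_mul_card_floating, sum_wt_floating]
  simp_rw [hF, ← Finset.mul_sum]
  exact mul_div_mul_left _ _ (kappa1_pos hc hconn).ne'

/-- For a finite connected undirected graph with positive
conductances and marked vertex `b`, and a vertex `z₀ ≠ b`, the expected number
of vertices of the floating component `Σ`, conditioned on `z₀ ∈ Σ`, under the
weight-proportional measure on two-component spanning forests, equals
`Σ_v G_{v,z₀} / G_{z₀,z₀}`. -/
theorem statement_10 {V : Type*} [Fintype V] [DecidableEq V] (c : Sym2 V → ℝ)
    (hc : ∀ e, 0 ≤ c e) (hloop : ∀ v : V, c s(v, v) = 0)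
    (hconn : ncomp (Finset.univ.filter fun e : Sym2 V => c e ≠ 0) = 1)
    (b z0 : V) (hz : z0 ≠ b) :
    (∑ B ∈ Finset.univ.filter (fun B => IsSF 2 B ∧ z0 ∈ floating b B),
        wt c B * ((floating b B).card : ℝ)) /
      (∑ B ∈ Finset.univ.filter (fun B => IsSF 2 B ∧ z0 ∈ floating b B), wt c B) =
      (∑ v : V, green c b v z0) / green c b z0 z0 :=
  statement_10_general c hc hconn b z0
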